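/- Let A and X be finite nonempty types, let t and η be integers with 2 ≤ t ≤ η, and for each i ∈ {1, …, t} let φᵢ : A × X → ℝ with 0 < φᵢ(a,x) ≤ 1 for all (a,x), and δᵢ : A × X → ℝ with δᵢ(a,x) > 0 for all (a,x). Set φmin = min over all i, a, x of φᵢ(a,x) and δmin = min over all i, a, x of δᵢ(a,x), and assume φmin ≤ 1/2 and ∑_{a,x} ∏_{i=1}^t φᵢ(a,x) ≥ 1. Then ∑_{a∈A, x∈X} (∏_{i=1}^t φᵢ(a,x)) · (∏_{i=2}^t φᵢ(a,x)) · sqrt(∑_{i=2}^t (δᵢ(a,x)/φᵢ(a,x))²) ≥ sqrt(η − 1) · δmin · φmin^{η−2}. -/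

import Mathlib

lemma dec_aux (φ : ℝ) (hφ : 0 < φ) (hφ2 : φ ≤ 1/2) :
    ∀ m n : ℕ, 2 ≤ m → m ≤ n →
    Real.sqrt ((n:ℝ)-1) * φ ^ (n-2) ≤ Real.sqrt ((m:ℝ)-1) * φ ^ (m-2) := by
  intro m n hm hmn
  induction n with
  | zero => omega
  | succ n ih =>
    rcases eq_or_lt_of_le hmn with h | h
    · rw [h]
    · have hmn' : m ≤ n := by omega
      have hn2 : 2 ≤ n := by omega
      refine le_trans ?_ (ih hmn')
      have he : n + 1 - 2 = (n - 2) + 1 := by omega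
      have hcast : ((n+1:ℕ):ℝ) - 1 = (n:ℝ) := by push_cast; ring
      rw [he, hcast, pow_succ]
      have hn2' : (2:ℝ) ≤ n := by exact_mod_cast hn2
      have hstep : Real.sqrt (n:ℝ) * φ ≤ Real.sqrt ((n:ℝ)-1) := by
        rw [← Real.sqrt_sq hφ.le, ← Real.sqrt_mul (by positivity)]
        apply Real.sqrt_le_sqrt
        nlinarith [mul_le_mul hφ2 hφ2 hφ.le (by norm_num : (0:ℝ) ≤ 1/2), sq_nonneg φ]
      calc Real.sqrt (n:ℝ) * (φ ^ (n-2) * φ)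
          = (Real.sqrt (n:ℝ) * φ) * φ ^ (n-2) := by ring
        _ ≤ Real.sqrt ((n:ℝ)-1) * φ ^ (n-2) :=
            mul_le_mul_of_nonneg_right hstep (by positivity)

/-- Lower bound on the error of a sum-product term of variable elimination
(Theorem 4.1 of the paper). The `t ≤ η` probability factors are indexed by `Fin t`
(so index `⟨0,_⟩` is the first factor and indices `i ≠ ⟨0,_⟩` correspond to
`i ∈ {2,…,t}`); `φmin` and `δmin` are the minima over all `i, a, x` of the factor
entries and of their entrywise errors respectively. Assuming `φmin ≤ 1/2` and that the
output factor sums to at least `1`, the total propagated error is at least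
`sqrt(η − 1) · δmin · φmin^{η−2}`. -/
theorem sum_product_error_lower_bound (A X : Type*) [Fintype A] [Fintype X]
    [Nonempty A] [Nonempty X]
    (t η : ℕ) (ht : 2 ≤ t) (htη : t ≤ η)
    (φ δ : Fin t → A × X → ℝ)
    (hφ : ∀ i p, 0 < φ i p ∧ φ i p ≤ 1)
    (hδ : ∀ i p, 0 < δ i p)
    (φmin δmin : ℝ)
    (hφmin : IsLeast (Set.range fun q : Fin t × (A × X) => φ q.1 q.2) φmin)
    (hδmin : IsLeast (Set.range fun q : Fin t × (A × X) => δ q.1 q.2) δmin)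
    (hφhalf : φmin ≤ 1 / 2)
    (hsum : 1 ≤ ∑ p : A × X, ∏ i, φ i p) :
    ∑ p : A × X, (∏ i, φ i p) *
        ((∏ i ∈ Finset.univ.filter (fun i : Fin t => i ≠ ⟨0, by omega⟩), φ i p) *
          Real.sqrt (∑ i ∈ Finset.univ.filter (fun i : Fin t => i ≠ ⟨0, by omega⟩),
            (δ i p / φ i p) ^ 2)) ≥
      Real.sqrt ((η : ℝ) - 1) * δmin * φmin ^ (η - 2) := by
  obtain ⟨⟨qφ, hqφ⟩, hφlb⟩ := hφmin
  obtain ⟨⟨qδ, hqδ⟩, hδlb⟩ := hδmin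
  have hφpos : 0 < φmin := hqφ ▸ (hφ qφ.1 qφ.2).1
  have hδpos : 0 < δmin := hqδ ▸ hδ qδ.1 qδ.2
  have hφle : ∀ i p, φmin ≤ φ i p := fun i p => hφlb ⟨(i,p), rfl⟩
  have hδle : ∀ i p, δmin ≤ δ i p := fun i p => hδlb ⟨(i,p), rfl⟩
  set z : Fin t := ⟨0, by omega⟩ with hz
  set S := Finset.univ.filter (fun i : Fin t => i ≠ z) with hS
  have hScard : S.card = t - 1 := by
    rw [hS, Finset.filter_ne', Finset.card_erase_of_mem (Finset.mem_univ _),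
      Finset.card_univ, Fintype.card_fin]
  set C := Real.sqrt ((t:ℝ) - 1) * (δmin * φmin ^ (t - 2)) with hC
  have ht2 : (2:ℝ) ≤ t := by exact_mod_cast ht
  have hCnn : 0 ≤ C := by positivity
  have key : ∀ p : A × X,
      C ≤ (∏ i ∈ S, φ i p) * Real.sqrt (∑ i ∈ S, (δ i p / φ i p) ^ 2) := by
    intro p
    have hPnn : 0 ≤ ∏ i ∈ S, φ i p := Finset.prod_nonneg fun i _ => (hφ i p).1.le
    rw [← Real.sqrt_sq hPnn, ← Real.sqrt_mul (sq_nonneg _), Finset.mul_sum]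
    have hterm : ∀ i ∈ S, (δmin * φmin ^ (t-2))^2 ≤ (∏ j ∈ S, φ j p)^2 * (δ i p / φ i p)^2 := by
      intro i hi
      have hφi := (hφ i p).1
      have h1 : (∏ j ∈ S, φ j p)^2 * (δ i p / φ i p)^2
          = (δ i p * ∏ j ∈ S.erase i, φ j p)^2 := by
        rw [← mul_pow]
        congr 1
        rw [← Finset.mul_prod_erase S (fun j => φ j p) hi]
        field_simp
      rw [h1]
      have hcard : (S.erase i).card = t - 2 := by
        rw [Finset.card_erase_of_mem hi, hScard]; omega
      have h2 : φmin ^ (t-2) ≤ ∏ j ∈ S.erase i, φ j p := by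
        calc φmin ^ (t-2) = ∏ _j ∈ S.erase i, φmin := by rw [Finset.prod_const, hcard]
        _ ≤ ∏ j ∈ S.erase i, φ j p :=
            Finset.prod_le_prod (fun _ _ => hφpos.le) (fun j _ => hφle j p)
      have h3 : δmin * φmin ^ (t-2) ≤ δ i p * ∏ j ∈ S.erase i, φ j p :=
        mul_le_mul (hδle i p) h2 (by positivity) (hδ i p).le
      exact pow_le_pow_left₀ (by positivity) h3 2
    have hsum2 : ((t-1 : ℕ):ℝ) * (δmin * φmin ^ (t-2))^2
        ≤ ∑ i ∈ S, (∏ j ∈ S, φ j p)^2 * (δ i p / φ i p)^2 := by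
      calc ((t-1 : ℕ):ℝ) * (δmin * φmin ^ (t-2))^2
          = S.card • ((δmin * φmin ^ (t-2))^2) := by
            rw [hScard, nsmul_eq_mul]
        _ ≤ _ := Finset.card_nsmul_le_sum S _ _ hterm
    have hc1 : ((t-1:ℕ):ℝ) = (t:ℝ) - 1 := by
      rw [Nat.cast_sub (by omega)]; norm_num
    calc C = Real.sqrt (((t:ℝ)-1) * (δmin * φmin ^ (t-2))^2) := by
          rw [Real.sqrt_mul (by linarith), Real.sqrt_sq (by positivity)]
      _ ≤ _ := Real.sqrt_le_sqrt (hc1 ▸ hsum2)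
  have htotal : C ≤ ∑ p : A × X, (∏ i, φ i p) *
      ((∏ i ∈ S, φ i p) * Real.sqrt (∑ i ∈ S, (δ i p / φ i p) ^ 2)) := by
    calc C = 1 * C := (one_mul C).symm
      _ ≤ (∑ p : A × X, ∏ i, φ i p) * C := by
          apply mul_le_mul_of_nonneg_right hsum hCnn
      _ = ∑ p : A × X, (∏ i, φ i p) * C := by rw [Finset.sum_mul]
      _ ≤ _ := by
          apply Finset.sum_le_sum
          intro p _
          exact mul_le_mul_of_nonneg_left (key p)
            (Finset.prod_nonneg fun i _ => (hφ i p).1.le)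
  refine le_trans ?_ htotal
  have hd := mul_le_mul_of_nonneg_left (dec_aux φmin hφpos hφhalf t η ht htη) hδpos.le
  calc Real.sqrt ((η:ℝ) - 1) * δmin * φmin ^ (η - 2)
      = δmin * (Real.sqrt ((η:ℝ) - 1) * φmin ^ (η - 2)) := by ring
    _ ≤ δmin * (Real.sqrt ((t:ℝ) - 1) * φmin ^ (t - 2)) := hd
    _ = C := by rw [hC]; ring
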